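/- arXiv:1211.1344 — 2 statements merged into one kernel-verified Lean document; each statement's English description precedes it below -/
import Mathlib

section
/- Let z ∈ ℝⁿ with z ≠ 0 and let 0 < w ≤ ‖z‖₁. Then λ̃₃ := sup{λ ≥ 0 : ‖S(z,2λ)‖₁ ≥ w} satisfies λ̃₃ ≤ (1 - w/‖z‖₁)·‖z‖_∞/2. -/
noncomputable def softTh (x t : ℝ) : ℝ := Real.sign x * max (|x| - t) 0

lemma abs_softTh (x : ℝ) {t : ℝ} (ht : 0 ≤ t) : |softTh x t| = max (|x| - t) 0 := by
  rcases lt_trichotomy x 0 with hx | rfl | hx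
  · simp [softTh, Real.sign_of_neg hx]
  · simp [softTh, ht]
  · simp [softTh, Real.sign_of_pos hx]

/-- `u ↦ max (x - u) 0` is convex, equals `x` at `u = 0` and vanishes at `u = M ≥ x`, so on `[0, M]`
it lies below the chord through these two points. -/
lemma mul_max_sub_le_mul_sub {x M s : ℝ} (hx : 0 ≤ x) (hxM : x ≤ M) (hs : 0 ≤ s) (hsM : s ≤ M) :
    M * max (x - s) 0 ≤ x * (M - s) := by
  rcases le_total (x - s) 0 with h | h
  · rw [max_eq_right h]
    nlinarith
  · rw [max_eq_left h]
    nlinarith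

section ThresholdedSum

variable {ι : Type*} [Fintype ι] {a : ι → ℝ} {M s : ℝ}

lemma sum_max_sub_eq_zero (haM : ∀ k, a k ≤ M) (hMs : M ≤ s) :
    ∑ k, max (a k - s) 0 = 0 :=
  Finset.sum_eq_zero fun k _ => max_eq_right (by linarith [haM k])

lemma mul_sum_max_sub_le (ha : ∀ k, 0 ≤ a k) (haM : ∀ k, a k ≤ M) (hs : 0 ≤ s)
    (hsM : s ≤ M) : M * ∑ k, max (a k - s) 0 ≤ (∑ k, a k) * (M - s) := by
  rw [Finset.mul_sum, Finset.sum_mul]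
  exact Finset.sum_le_sum fun k _ => mul_max_sub_le_mul_sub (ha k) (haM k) hs hsM

end ThresholdedSum

theorem stmt_7_general (n : ℕ) (z : Fin n → ℝ) (w : ℝ) (hw : 0 < w)
    (hw1 : w ≤ ∑ k, |z k|) :
    sSup {lam : ℝ | 0 ≤ lam ∧ w ≤ ∑ k, |softTh (z k) (2 * lam)|}
      ≤ (1 - w / ∑ k, |z k|) * (⨆ k, |z k|) / 2 := by
  set N := ∑ k, |z k|
  set M := ⨆ k, |z k|
  have hN : 0 < N := hw.trans_le hw1
  have hle : ∀ k, |z k| ≤ M := le_ciSup (Set.finite_range _).bddAbove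
  have hM : 0 ≤ M := Real.iSup_nonneg fun k => abs_nonneg _
  refine Real.sSup_le ?_ (div_nonneg (mul_nonneg (sub_nonneg.2 ((div_le_one hN).2 hw1)) hM)
    zero_le_two)
  rintro lam ⟨hlam, hwlam⟩
  have hs : 0 ≤ 2 * lam := by linarith
  simp only [abs_softTh _ hs] at hwlam
  have hsM : 2 * lam ≤ M := by
    by_contra! h
    linarith [sum_max_sub_eq_zero hle h.le]
  have hchord : M * w ≤ N * (M - 2 * lam) :=
    (mul_le_mul_of_nonneg_left hwlam hM).trans
      (mul_sum_max_sub_le (fun k => abs_nonneg _) hle hs hsM)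
  rw [le_div_iff₀ two_pos, sub_mul, one_mul, div_mul_eq_mul_div, le_sub_comm, div_le_iff₀ hN]
  linarith

theorem stmt_7 (n : ℕ) (z : Fin n → ℝ) (hz : z ≠ 0) (w : ℝ) (hw : 0 < w)
    (hw1 : w ≤ ∑ k, |z k|) :
    sSup {lam : ℝ | 0 ≤ lam ∧ w ≤ ∑ k, |softTh (z k) (2 * lam)|}
      ≤ (1 - w / ∑ k, |z k|) * (⨆ k, |z k|) / 2 :=
  stmt_7_general n z w hw hw1
end

section
/- For w ≥ 0, z ∈ ℝⁿ, and the unique solution (β⁺(λ), β⁻(λ), θ(λ)) of the hierarchy-constrained problem (minimize (1/2)(w-(β⁺-β⁻))² + (1/2)‖z-θ‖² + λ(β⁺+β⁻) + λ‖θ‖₁ s.t. β⁺,β⁻ ≥ 0, ‖θ‖₁ ≤ β⁺+β⁻), the activation point of coordinate k, ν̂ₖ := sup{λ > 0 : θₖ(λ) ≠ 0}, equals min{ |zₖ|, |zₖ|/2 + max(w - ‖S(z,|zₖ|)‖₁, 0)/2 }, where ‖S(z,|zₖ|)‖₁ = Σ_{l : |z_l| > |zₖ|} (|z_l| - |zₖ|).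 -/
noncomputable def objFn (n : ℕ) (lam1 lam2 w : ℝ) (z : Fin n → ℝ)
    (p : ℝ × ℝ × (Fin n → ℝ)) : ℝ :=
  (1/2) * (w - (p.1 - p.2.1))^2 + (1/2) * (∑ k, (z k - p.2.2 k)^2)
    + lam1 * (p.1 + p.2.1) + lam2 * ∑ k, |p.2.2 k|

def Feasible (n : ℕ) (p : ℝ × ℝ × (Fin n → ℝ)) : Prop :=
  0 ≤ p.1 ∧ 0 ≤ p.2.1 ∧ (∑ k, |p.2.2 k|) ≤ p.1 + p.2.1
lemma sum_comp_update {n : ℕ} (g : Fin n → ℝ → ℝ) (θ : Fin n → ℝ) (l : Fin n) (v : ℝ) :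
    ∑ j, g j (Function.update θ l v j) = ∑ j, g j (θ j) - g l (θ l) + g l v := by
  have h : (fun j => g j (Function.update θ l v j))
      = Function.update (fun j => g j (θ j)) l (g l v) := by
    funext j
    by_cases hj : j = l
    · subst hj; simp
    · simp [Function.update_of_ne hj]
  rw [h, Finset.sum_update_of_mem (Finset.mem_univ l),
    Finset.sum_sdiff_eq_sub (Finset.singleton_subset_iff.2 (Finset.mem_univ l)),
    Finset.sum_singleton]
  ring

lemma objFn_update {n : ℕ} (lam w : ℝ) (z : Fin n → ℝ) (B C : ℝ) (θ : Fin n → ℝ)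
    (B' C' : ℝ) (l : Fin n) (v : ℝ) :
    objFn n lam lam w z (B', C', Function.update θ l v) =
      objFn n lam lam w z (B, C, θ)
      + ((1/2) * (w - (B' - C'))^2 - (1/2) * (w - (B - C))^2)
      + ((1/2) * (z l - v)^2 - (1/2) * (z l - θ l)^2)
      + lam * ((B' + C') - (B + C)) + lam * (|v| - |θ l|) := by
  unfold objFn
  simp only
  rw [sum_comp_update (fun j t => (z j - t)^2) θ l v,
    sum_comp_update (fun j _t => |_t|) θ l v]
  ring

lemma nonneg_of_small {A b ε₀ : ℝ} (hb : 0 ≤ b) (hε₀ : 0 < ε₀)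
    (h : ∀ ε : ℝ, 0 < ε → ε ≤ ε₀ → 0 ≤ A * ε + b * ε ^ 2) : 0 ≤ A := by
  by_contra hA
  push_neg at hA
  set ε : ℝ := min ε₀ (-A / (2 * b + 1)) with hε
  have hp1 : 0 < -A / (2 * b + 1) := div_pos (by linarith) (by linarith)
  have hεpos : 0 < ε := lt_min hε₀ hp1
  have hle : ε ≤ -A / (2 * b + 1) := min_le_right _ _
  have h1 := h ε hεpos (min_le_left _ _)
  have h2 : b * ε ≤ b * (-A / (2 * b + 1)) := mul_le_mul_of_nonneg_left hle hb
  have h3 : b * (-A / (2 * b + 1)) ≤ -A / 2 := by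
    rw [mul_div_assoc', div_le_div_iff₀ (by linarith) (by norm_num : (0:ℝ) < 2)]
    nlinarith
  have h4 : A + b * ε ≤ A / 2 := by linarith
  nlinarith [mul_lt_mul_of_pos_left (show A / 2 < 0 by linarith) hεpos]

section Pert
variable {n : ℕ} {lam w : ℝ} {z : Fin n → ℝ} {B C : ℝ} {θ : Fin n → ℝ}

/-- Master perturbation lemma: change only the β's. -/
lemma pert0 (hlam : 0 ≤ lam)
    (hopt : ∀ q, Feasible n q → objFn n lam lam w z (B, C, θ) ≤ objFn n lam lam w z q)
    (a c ε₀ : ℝ) (hε₀ : 0 < ε₀)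
    (hfeas : ∀ ε : ℝ, 0 < ε → ε ≤ ε₀ → Feasible n (B + a * ε, C + c * ε, θ)) :
    0 ≤ (a - c) * ((B - C) - w) + lam * (a + c) := by
  apply nonneg_of_small (b := (a - c)^2 / 2) (by positivity) hε₀
  intro ε hε hε'
  have h1 := hopt _ (hfeas ε hε hε')
  unfold objFn at h1
  simp only at h1
  nlinarith [h1]

/-- Master perturbation lemma: change β's and one coordinate of θ. -/
lemma pert1 (hlam : 0 ≤ lam)
    (hopt : ∀ q, Feasible n q → objFn n lam lam w z (B, C, θ) ≤ objFn n lam lam w z q)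
    (l : Fin n) (a c τ κ ε₀ : ℝ) (hε₀ : 0 < ε₀)
    (hfeas : ∀ ε : ℝ, 0 < ε → ε ≤ ε₀ →
      Feasible n (B + a * ε, C + c * ε, Function.update θ l (θ l + τ * ε)))
    (habs : ∀ ε : ℝ, 0 < ε → ε ≤ ε₀ → |θ l + τ * ε| - |θ l| ≤ κ * ε) :
    0 ≤ (a - c) * ((B - C) - w) + lam * (a + c) + lam * κ - τ * (z l - θ l) := by
  apply nonneg_of_small (b := ((a - c)^2 + τ^2) / 2) (by positivity) hε₀
  intro ε hε hε'
  have h1 := hopt _ (hfeas ε hε hε')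
  rw [objFn_update lam w z B C θ (B + a * ε) (C + c * ε) l (θ l + τ * ε)] at h1
  have h2 := habs ε hε hε'
  have h3 : lam * (|θ l + τ * ε| - |θ l|) ≤ lam * (κ * ε) :=
    mul_le_mul_of_nonneg_left h2 hlam
  nlinarith [h1, h3]

/-- Exchange perturbation: move mass from coordinate l to coordinate k. -/
lemma pert2 (hlam : 0 ≤ lam)
    (hopt : ∀ q, Feasible n q → objFn n lam lam w z (B, C, θ) ≤ objFn n lam lam w z q)
    (hF : Feasible n (B, C, θ))
    (k l : Fin n) (hkl : k ≠ l) (hθk : θ k = 0) (hθl : θ l ≠ 0) :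
    |z k| ≤ |z l| - |θ l| := by
  set σ : ℝ := if 0 < θ l then 1 else -1 with hσ
  have hσθ : σ * θ l = |θ l| := by
    rcases lt_trichotomy (θ l) 0 with h | h | h
    · simp [hσ, not_lt.2 h.le, abs_of_neg h]
    · exact absurd h hθl
    · simp [hσ, h, abs_of_pos h]
  have hσsq : σ ^ 2 = 1 := by rcases ite_eq_or_eq (0 < θ l) (1:ℝ) (-1) with h | h <;>
    rw [hσ, h] <;> norm_num
  have hσabs : |σ| = 1 := by rcases ite_eq_or_eq (0 < θ l) (1:ℝ) (-1) with h | h <;>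
    rw [hσ, h] <;> norm_num
  set τk : ℝ := if 0 ≤ z k then 1 else -1 with hτk
  have hτz : τk * z k = |z k| := by
    rcases le_or_gt 0 (z k) with h | h
    · simp [hτk, h, abs_of_nonneg h]
    · simp [hτk, not_le.2 h, abs_of_neg h]
  have hτsq : τk ^ 2 = 1 := by rcases ite_eq_or_eq (0 ≤ z k) (1:ℝ) (-1) with h | h <;>
    rw [hτk, h] <;> norm_num
  have hτabs : |τk| = 1 := by rcases ite_eq_or_eq (0 ≤ z k) (1:ℝ) (-1) with h | h <;>
    rw [hτk, h] <;> norm_num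
  have habsl : ∀ ε : ℝ, 0 < ε → ε ≤ |θ l| → |θ l + (-σ) * ε| = |θ l| - ε := by
    intro ε hε hε'
    have he : θ l + (-σ) * ε = σ * (|θ l| - ε) := by
      linear_combination σ * hσθ - θ l * hσsq
    rw [he, abs_mul, hσabs, one_mul, abs_of_nonneg (by linarith)]
  have key : 0 ≤ σ * (z l - θ l) - |z k| := by
    apply nonneg_of_small (b := 1) (by norm_num) (abs_pos.2 hθl)
    intro ε hε hε'
    set θ' := Function.update θ l (θ l + (-σ) * ε) with hθ'
    have hθ'k : θ' k = 0 := by rw [hθ', Function.update_of_ne hkl, hθk]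
    have e1 : |θ l + (-σ) * ε| = |θ l| - ε := habsl ε hε hε'
    have e2 : |θ' k + τk * ε| = ε := by
      rw [hθ'k, zero_add, abs_mul, hτabs, one_mul, abs_of_pos hε]
    have s1 : ∑ j, |θ' j| = ∑ j, |θ j| - |θ l| + (|θ l| - ε) := by
      rw [hθ', sum_comp_update (fun _j t => |t|) θ l (θ l + (-σ) * ε), e1]
    have hfeas : Feasible n (B, C, Function.update θ' k (θ' k + τk * ε)) := by
      refine ⟨hF.1, hF.2.1, ?_⟩
      have h22 := hF.2.2
      simp only at h22 ⊢
      rw [sum_comp_update (fun _j t => |t|) θ' k (θ' k + τk * ε), s1, e2, hθ'k, abs_zero]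
      linarith
    have h1 := hopt _ hfeas
    rw [objFn_update lam w z B C θ' B C k (θ' k + τk * ε)] at h1
    rw [hθ', objFn_update lam w z B C θ B C l (θ l + (-σ) * ε)] at h1
    rw [← hθ'] at h1
    rw [e1, e2, hθ'k] at h1
    simp only [abs_zero, sub_zero] at h1
    have hτzε : τk * z k * ε = |z k| * ε := by rw [hτz]
    have hσε : σ ^ 2 * ε ^ 2 = ε ^ 2 := by rw [hσsq]; ring
    have hτε : τk ^ 2 * ε ^ 2 = ε ^ 2 := by rw [hτsq]; ring
    nlinarith [h1, hτzε, hσε, hτε]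
  have hσz : σ * z l ≤ |z l| := by
    calc σ * z l ≤ |σ * z l| := le_abs_self _
    _ = |z l| := by rw [abs_mul, hσabs, one_mul]
  nlinarith [key, hσθ, hσz]

end Pert

lemma exists_sign (x : ℝ) : ∃ σ : ℝ, |σ| = 1 ∧ σ * x = |x| := by
  rcases le_or_gt 0 x with h | h
  · exact ⟨1, by norm_num, by rw [one_mul, abs_of_nonneg h]⟩
  · exact ⟨-1, by norm_num, by rw [abs_of_neg h]; ring⟩

lemma abs_sub_sign (x σ ε : ℝ) (hσ : |σ| = 1) (hσx : σ * x = |x|)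
    (hε' : ε ≤ |x|) : |x + (-σ) * ε| = |x| - ε := by
  have hσsq : σ * σ = 1 := by
    have := abs_mul_abs_self σ
    rw [hσ] at this; linarith
  have he : x + (-σ) * ε = σ * (|x| - ε) := by
    linear_combination σ * hσx - x * hσsq
  rw [he, abs_mul, hσ, one_mul, abs_of_nonneg (by linarith)]

section Facts
variable {n : ℕ} {lam w : ℝ} {z : Fin n → ℝ} {B C : ℝ} {θ : Fin n → ℝ}

lemma F_dw (hw : 0 ≤ w) (hlam : 0 < lam) (hF : Feasible n (B, C, θ))
    (hopt : ∀ q, Feasible n q → objFn n lam lam w z (B, C, θ) ≤ objFn n lam lam w z q) :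
    B - C ≤ w := by
  obtain ⟨hB, hC, hs⟩ := hF
  rcases eq_or_lt_of_le hB with h | h
  · linarith
  · have h0 := pert0 (z := z) hlam.le hopt (-1) 1 B h (fun ε hε hε' => by
      refine ⟨by simpa using by linarith, by simpa using by linarith, ?_⟩
      · simp only at hs ⊢; linarith)
    nlinarith [h0]

lemma F_A (hw : 0 ≤ w) (hlam : 0 < lam) (hF : Feasible n (B, C, θ))
    (hopt : ∀ q, Feasible n q → objFn n lam lam w z (B, C, θ) ≤ objFn n lam lam w z q)
    (l : Fin n) :
    |z l| - |θ l| + (w - (B - C)) ≤ 2 * lam := by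
  obtain ⟨hB, hC, hs⟩ := hF
  simp only at hB hC hs
  obtain ⟨σ, hσ1, hσ2⟩ := exists_sign (z l - θ l)
  have habs : ∀ ε : ℝ, 0 < ε → ε ≤ 1 → |θ l + σ * ε| - |θ l| ≤ 1 * ε := by
    intro ε hε _
    calc |θ l + σ * ε| - |θ l| ≤ |θ l| + |σ * ε| - |θ l| := by
          linarith [abs_add_le (θ l) (σ * ε)]
      _ = 1 * ε := by rw [abs_mul, hσ1, one_mul, abs_of_pos hε]; ring
  have h0 := pert1 hlam.le hopt l 1 0 σ 1 1 one_pos (fun ε hε hε' => by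
    refine ⟨show (0:ℝ) ≤ B + 1 * ε by linarith, show (0:ℝ) ≤ C + 0 * ε by linarith, ?_⟩
    show (∑ j, |Function.update θ l (θ l + σ * ε) j|) ≤ B + 1 * ε + (C + 0 * ε)
    rw [sum_comp_update (fun _j t => |t|) θ l (θ l + σ * ε)]
    have := habs ε hε hε'
    linarith) habs
  have h1 : σ * (z l - θ l) = |z l - θ l| := hσ2
  have h2 := abs_sub_abs_le_abs_sub (z l) (θ l)
  nlinarith [h0]

lemma F_P1 (hw : 0 ≤ w) (hlam : 0 < lam) (hF : Feasible n (B, C, θ))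
    (hopt : ∀ q, Feasible n q → objFn n lam lam w z (B, C, θ) ≤ objFn n lam lam w z q)
    (l : Fin n) (hθl : θ l ≠ 0) :
    lam + |θ l| ≤ |z l| := by
  obtain ⟨hB, hC, hs⟩ := hF
  simp only at hB hC hs
  obtain ⟨σ, hσ1, hσ2⟩ := exists_sign (θ l)
  have habs : ∀ ε : ℝ, 0 < ε → ε ≤ |θ l| → |θ l + (-σ) * ε| - |θ l| ≤ (-1) * ε := by
    intro ε hε hε'
    rw [abs_sub_sign (θ l) σ ε hσ1 hσ2 hε']; ring_nf; rfl
  have h0 := pert1 hlam.le hopt l 0 0 (-σ) (-1) (|θ l|) (abs_pos.2 hθl) (fun ε hε hε' => by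
    refine ⟨show (0:ℝ) ≤ B + 0 * ε by linarith, show (0:ℝ) ≤ C + 0 * ε by linarith, ?_⟩
    show (∑ j, |Function.update θ l (θ l + (-σ) * ε) j|) ≤ B + 0 * ε + (C + 0 * ε)
    rw [sum_comp_update (fun _j t => |t|) θ l (θ l + (-σ) * ε),
      abs_sub_sign (θ l) σ ε hσ1 hσ2 hε']
    linarith) habs
  -- h0 : 0 ≤ -lam + σ * (z l - θ l)
  have h1 : σ * z l ≤ |z l| := by
    calc σ * z l ≤ |σ * z l| := le_abs_self _
      _ = |z l| := by rw [abs_mul, hσ1, one_mul]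
  nlinarith [h0]

lemma F_P1C (hw : 0 ≤ w) (hlam : 0 < lam) (hF : Feasible n (B, C, θ))
    (hopt : ∀ q, Feasible n q → objFn n lam lam w z (B, C, θ) ≤ objFn n lam lam w z q)
    (l : Fin n) (hθl : θ l ≠ 0) (hCpos : 0 < C) :
    2 * lam + (w - (B - C)) ≤ |z l| - |θ l| := by
  obtain ⟨hB, hC, hs⟩ := hF
  simp only at hB hC hs
  obtain ⟨σ, hσ1, hσ2⟩ := exists_sign (θ l)
  have habs : ∀ ε : ℝ, 0 < ε → ε ≤ min (|θ l|) C → |θ l + (-σ) * ε| - |θ l| ≤ (-1) * ε := by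
    intro ε hε hε'
    rw [abs_sub_sign (θ l) σ ε hσ1 hσ2 (le_trans hε' (min_le_left _ _))]; ring_nf; rfl
  have h0 := pert1 hlam.le hopt l 0 (-1) (-σ) (-1) (min (|θ l|) C)
    (lt_min (abs_pos.2 hθl) hCpos) (fun ε hε hε' => by
      have hεC := le_trans hε' (min_le_right (|θ l|) C)
      refine ⟨show (0:ℝ) ≤ B + 0 * ε by linarith,
        show (0:ℝ) ≤ C + (-1) * ε by linarith, ?_⟩
      show (∑ j, |Function.update θ l (θ l + (-σ) * ε) j|) ≤ B + 0 * ε + (C + (-1) * ε)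
      rw [sum_comp_update (fun _j t => |t|) θ l (θ l + (-σ) * ε),
        abs_sub_sign (θ l) σ ε hσ1 hσ2 (le_trans hε' (min_le_left _ _))]
      linarith) habs
  -- h0 : 0 ≤ (B - C - w) - 2 lam + σ * (z l - θ l)
  have h1 : σ * z l ≤ |z l| := by
    calc σ * z l ≤ |σ * z l| := le_abs_self _
      _ = |z l| := by rw [abs_mul, hσ1, one_mul]
  nlinarith [h0]

lemma F_P1B (hw : 0 ≤ w) (hlam : 0 < lam) (hF : Feasible n (B, C, θ))
    (hopt : ∀ q, Feasible n q → objFn n lam lam w z (B, C, θ) ≤ objFn n lam lam w z q)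
    (l : Fin n) (hθl : θ l ≠ 0) (hBpos : 0 < B) :
    2 * lam ≤ |z l| - |θ l| + (w - (B - C)) := by
  obtain ⟨hB, hC, hs⟩ := hF
  simp only at hB hC hs
  obtain ⟨σ, hσ1, hσ2⟩ := exists_sign (θ l)
  have habs : ∀ ε : ℝ, 0 < ε → ε ≤ min (|θ l|) B → |θ l + (-σ) * ε| - |θ l| ≤ (-1) * ε := by
    intro ε hε hε'
    rw [abs_sub_sign (θ l) σ ε hσ1 hσ2 (le_trans hε' (min_le_left _ _))]; ring_nf; rfl
  have h0 := pert1 hlam.le hopt l (-1) 0 (-σ) (-1) (min (|θ l|) B)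
    (lt_min (abs_pos.2 hθl) hBpos) (fun ε hε hε' => by
      have hεB := le_trans hε' (min_le_right (|θ l|) B)
      refine ⟨show (0:ℝ) ≤ B + (-1) * ε by linarith,
        show (0:ℝ) ≤ C + 0 * ε by linarith, ?_⟩
      show (∑ j, |Function.update θ l (θ l + (-σ) * ε) j|) ≤ B + (-1) * ε + (C + 0 * ε)
      rw [sum_comp_update (fun _j t => |t|) θ l (θ l + (-σ) * ε),
        abs_sub_sign (θ l) σ ε hσ1 hσ2 (le_trans hε' (min_le_left _ _))]
      linarith) habs
  have h1 : σ * z l ≤ |z l| := by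
    calc σ * z l ≤ |σ * z l| := le_abs_self _
      _ = |z l| := by rw [abs_mul, hσ1, one_mul]
  nlinarith [h0]

lemma F_slack (hw : 0 ≤ w) (hlam : 0 < lam) (hF : Feasible n (B, C, θ))
    (hopt : ∀ q, Feasible n q → objFn n lam lam w z (B, C, θ) ≤ objFn n lam lam w z q)
    (k : Fin n) (hθk : θ k = 0) (hsl : ∑ j, |θ j| < B + C) :
    |z k| ≤ lam := by
  obtain ⟨hB, hC, hs⟩ := hF
  simp only at hB hC hs
  obtain ⟨τ, hτ1, hτ2⟩ := exists_sign (z k)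
  have habs : ∀ ε : ℝ, 0 < ε → ε ≤ B + C - ∑ j, |θ j| → |θ k + τ * ε| - |θ k| ≤ 1 * ε := by
    intro ε hε _
    rw [hθk, zero_add, abs_zero, abs_mul, hτ1, one_mul, abs_of_pos hε]; ring_nf; rfl
  have h0 := pert1 hlam.le hopt k 0 0 τ 1 (B + C - ∑ j, |θ j|) (by linarith)
    (fun ε hε hε' => by
      refine ⟨show (0:ℝ) ≤ B + 0 * ε by linarith, show (0:ℝ) ≤ C + 0 * ε by linarith, ?_⟩
      show (∑ j, |Function.update θ k (θ k + τ * ε) j|) ≤ B + 0 * ε + (C + 0 * ε)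
      rw [sum_comp_update (fun _j t => |t|) θ k (θ k + τ * ε), hθk, zero_add, abs_zero,
        abs_mul, hτ1, one_mul, abs_of_pos hε]
      linarith) habs
  rw [hθk] at h0
  nlinarith [h0, hτ2]

end Facts

section Main
variable {n : ℕ} {lam w : ℝ} {z : Fin n → ℝ} {B C : ℝ} {θ : Fin n → ℝ}

/-- If λ is at least the activation point, then θ_k = 0. -/
lemma theta_eq_zero (hw : 0 ≤ w) (hlam : 0 < lam) (hF : Feasible n (B, C, θ))
    (hopt : ∀ q, Feasible n q → objFn n lam lam w z (B, C, θ) ≤ objFn n lam lam w z q)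
    (k : Fin n)
    (hge : min (|z k|) (|z k| / 2 + max (w - ∑ l, max (|z l| - |z k|) 0) 0 / 2) ≤ lam) :
    θ k = 0 := by
  by_contra hθk
  have hP1 := F_P1 hw hlam hF hopt k hθk
  have habsθ : 0 < |θ k| := abs_pos.2 hθk
  set T : ℝ := ∑ l, max (|z l| - |z k|) 0 with hT
  have hM : 0 ≤ max (w - T) 0 := le_max_right _ _
  have hM2 : w - T ≤ max (w - T) 0 := le_max_left _ _
  have hdw : B - C ≤ w := F_dw hw hlam hF hopt
  rcases min_cases (|z k|) (|z k| / 2 + max (w - T) 0 / 2) with ⟨he, _⟩ | ⟨he, _⟩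
  · rw [he] at hge; linarith
  · rw [he] at hge
    -- 2 lam ≥ |z k| + max (w - T) 0
    obtain ⟨hB0, hC0, hs0⟩ := hF
    simp only at hB0 hC0 hs0
    rcases eq_or_lt_of_le hC0 with hC | hC
    · -- C = 0
      have hsum_ge : |θ k| ≤ ∑ j, |θ j| :=
        Finset.single_le_sum (f := fun j => |θ j|) (fun j _ => abs_nonneg _)
          (Finset.mem_univ k)
      have hBpos : 0 < B := by linarith
      have hPB := F_P1B hw hlam ⟨hB0, hC0, hs0⟩ hopt k hθk hBpos
      -- w - (B - C) ≥ 2 lam - |z k| + |θ k| ≥ max (w-T) 0 + |θ k|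
      have h5 : B - C + |θ k| ≤ T := by linarith
      have hlow : ∀ l, max (|z l| - |z k|) 0 ≤ |θ l| := by
        intro l
        have hA := F_A hw hlam ⟨hB0, hC0, hs0⟩ hopt l
        exact max_le (by linarith) (abs_nonneg _)
      have hsplit1 : max (|z k| - |z k|) 0 + ∑ j ∈ Finset.univ.erase k,
          max (|z j| - |z k|) 0 = T := by
        rw [hT]; exact Finset.add_sum_erase _ (fun j => max (|z j| - |z k|) 0) (Finset.mem_univ k)
      have hsplit2 : |θ k| + ∑ j ∈ Finset.univ.erase k, |θ j| = ∑ j, |θ j| :=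
        Finset.add_sum_erase _ (fun j => |θ j|) (Finset.mem_univ k)
      have hes : ∑ j ∈ Finset.univ.erase k, max (|z j| - |z k|) 0
          ≤ ∑ j ∈ Finset.univ.erase k, |θ j| :=
        Finset.sum_le_sum (fun j _ => hlow j)
      have hzz : max (|z k| - |z k|) 0 = 0 := by simp
      linarith
    · -- 0 < C
      have hPC := F_P1C hw hlam ⟨hB0, hC0, hs0⟩ hopt k hθk hC
      linarith

/-- If λ is below the activation point, then θ_k ≠ 0. -/
lemma theta_ne_zero (hw : 0 ≤ w) (hlam : 0 < lam) (hF : Feasible n (B, C, θ))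
    (hopt : ∀ q, Feasible n q → objFn n lam lam w z (B, C, θ) ≤ objFn n lam lam w z q)
    (k : Fin n)
    (hlt : lam < min (|z k|) (|z k| / 2 + max (w - ∑ l, max (|z l| - |z k|) 0) 0 / 2)) :
    θ k ≠ 0 := by
  intro hθk
  set T : ℝ := ∑ l, max (|z l| - |z k|) 0 with hT
  have hl1 : lam < |z k| := lt_of_lt_of_le hlt (min_le_left _ _)
  have hl2 : lam < |z k| / 2 + max (w - T) 0 / 2 := lt_of_lt_of_le hlt (min_le_right _ _)
  have hA := F_A hw hlam hF hopt k
  rw [hθk, abs_zero, sub_zero] at hA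
  have hdw : B - C ≤ w := F_dw hw hlam hF hopt
  obtain ⟨hB0, hC0, hs0⟩ := hF
  simp only at hB0 hC0 hs0
  rcases eq_or_lt_of_le hs0 with hseq | hslt
  · -- sum = B + C : bound the sum by T
    have hbound : ∀ l, |θ l| ≤ max (|z l| - |z k|) 0 := by
      intro l
      by_cases hθl : θ l = 0
      · rw [hθl, abs_zero]; exact le_max_right _ _
      · have hkl : k ≠ l := by rintro rfl; exact hθl hθk
        have := pert2 hlam.le hopt ⟨hB0, hC0, hs0⟩ k l hkl hθk hθl
        exact le_trans (by linarith) (le_max_left _ _)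
    have hsum : ∑ j, |θ j| ≤ T := Finset.sum_le_sum (fun j _ => hbound j)
    -- B - C ≤ B + C = ∑ ≤ T, so w - (B-C) ≥ w - T and ≥ 0
    have h1 : B - C ≤ T := by linarith
    have h2 : max (w - T) 0 ≤ w - (B - C) := max_le (by linarith) (by linarith)
    linarith
  · exact absurd (F_slack hw hlam ⟨hB0, hC0, hs0⟩ hopt k hθk hslt) (not_le.2 hl1)

end Main

theorem stmt_17 (n : ℕ) (w : ℝ) (hw : 0 ≤ w) (z : Fin n → ℝ)
    (sol : ℝ → ℝ × ℝ × (Fin n → ℝ))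
    (hsol : ∀ lam : ℝ, 0 < lam → Feasible n (sol lam) ∧
      ∀ q : ℝ × ℝ × (Fin n → ℝ), Feasible n q →
        objFn n lam lam w z (sol lam) ≤ objFn n lam lam w z q)
    (k : Fin n) (hk : z k ≠ 0) :
    sSup {lam : ℝ | 0 < lam ∧ (sol lam).2.2 k ≠ 0}
      = min (|z k|) (|z k| / 2 + max (w - ∑ l, max (|z l| - |z k|) 0) 0 / 2) := by
  set ν : ℝ := min (|z k|) (|z k| / 2 + max (w - ∑ l, max (|z l| - |z k|) 0) 0 / 2)
    with hν
  have hzk : 0 < |z k| := abs_pos.2 hk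
  have hν0 : 0 < ν :=
    lt_min hzk (by positivity)
  have hset : {lam : ℝ | 0 < lam ∧ (sol lam).2.2 k ≠ 0} = Set.Ioo 0 ν := by
    ext lam
    simp only [Set.mem_setOf_eq, Set.mem_Ioo]
    constructor
    · rintro ⟨h1, h2⟩
      refine ⟨h1, ?_⟩
      by_contra h3
      push_neg at h3
      obtain ⟨hF, hopt⟩ := hsol lam h1
      exact h2 (theta_eq_zero hw h1 hF hopt k (hν ▸ h3))
    · rintro ⟨h1, h2⟩
      obtain ⟨hF, hopt⟩ := hsol lam h1
      exact ⟨h1, theta_ne_zero hw h1 hF hopt k (hν ▸ h2)⟩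
  rw [hset]
  exact csSup_Ioo hν0
end
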